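/- Let V be a countable type with a metric d and let x ≠ y be points of V. Let μₓ, μ_y : V → ℝ be absolutely summable functions with ∑' μₓ = ∑' μ_y = 0 (zero-mass signed measures) and finite first moments, i.e. ∑'_w |μ_z(w)|·d(z,w) < ∞ for z ∈ {x,y}, and suppose there is ε₀ > 0 such that δ_z + ε·μ_z is nonnegative (hence a probability mass function) for z ∈ {x,y} and every ε ∈ [0, ε₀]. Then the limit lim_{ε → 0⁺} (1/ε)·(1 − W(δₓ + ε·μₓ, δ_y + ε·μ_y)/d(x,y)) exists and is a real number; that is, the continuous-time Ollivier–Ricci curvature Ric(x,y) is well-defined for time-affine random walks of the form μ_z^ε = δ_z + ε·μ_z. -/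
import Mathlib


open scoped ENNReal
open Filter

variable {V : Type*}

/-- `d` is a metric on `V`. -/
def IsMetric (d : V → V → ℝ) : Prop :=
  (∀ a b, d a b = d b a) ∧ (∀ a b, d a b = 0 ↔ a = b) ∧
  (∀ a b c, d a c ≤ d a b + d b c)

/-- `q` is a coupling of the probability mass functions `μ` and `ν`. -/
def IsCoupling (μ ν : V → ℝ≥0∞) (q : V × V → ℝ≥0∞) : Prop :=
  (∀ a, ∑' b, q (a, b) = μ a) ∧ (∀ b, ∑' a, q (a, b) = ν b)

/-- The L¹-Wasserstein distance, computed in `[0,∞]`. -/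
noncomputable def Wass (d : V → V → ℝ) (μ ν : V → ℝ≥0∞) : ℝ≥0∞ :=
  ⨅ q : {q : V × V → ℝ≥0∞ // IsCoupling μ ν q},
    ∑' p : V × V, ENNReal.ofReal (d p.1 p.2) * q.1 p

/-- The point mass at `z`. -/
noncomputable def delta [DecidableEq V] (z : V) : V → ℝ :=
  fun w => if w = z then 1 else 0


/-- cost of a coupling -/
noncomputable def wcost (d : V → V → ℝ) (q : V × V → ℝ≥0∞) : ℝ≥0∞ :=
  ∑' p : V × V, ENNReal.ofReal (d p.1 p.2) * q p

lemma wass_eq (d : V → V → ℝ) (μ ν : V → ℝ≥0∞) :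
    Wass d μ ν = ⨅ q : {q : V × V → ℝ≥0∞ // IsCoupling μ ν q}, wcost d q.1 := rfl

lemma metric_nonneg {d : V → V → ℝ} (hd : IsMetric d) (a b : V) : 0 ≤ d a b := by
  have h1 : d a a = 0 := (hd.2.1 a a).2 rfl
  have h2 := hd.2.2 a b a
  rw [h1, hd.1 b a] at h2
  linarith

lemma prod_coupling (μ ν : V → ℝ≥0∞) (hμ : ∑' a, μ a = 1) (hν : ∑' b, ν b = 1) :
    IsCoupling μ ν (fun p => μ p.1 * ν p.2) := by
  constructor
  · intro a; simp only [ENNReal.tsum_mul_left, hν, mul_one]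
  · intro b; simp only [ENNReal.tsum_mul_right, hμ, one_mul]

lemma marg_fst {μ ν : V → ℝ≥0∞} {q : V × V → ℝ≥0∞} (hq : IsCoupling μ ν q)
    (c : V → ℝ≥0∞) : ∑' p : V × V, c p.1 * q p = ∑' a, c a * μ a := by
  rw [ENNReal.tsum_prod']
  exact tsum_congr fun a => by
    simp only []
    rw [show (fun b => c (a, b).1 * q (a, b)) = fun b => c a * q (a, b) from rfl,
      ENNReal.tsum_mul_left, hq.1 a]

lemma marg_snd {μ ν : V → ℝ≥0∞} {q : V × V → ℝ≥0∞} (hq : IsCoupling μ ν q)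
    (c : V → ℝ≥0∞) : ∑' p : V × V, c p.2 * q p = ∑' b, c b * ν b := by
  rw [ENNReal.tsum_prod', ENNReal.tsum_comm]
  exact tsum_congr fun b => by
    rw [show (fun a => c (a, b).2 * q (a, b)) = fun a => c b * q (a, b) from rfl,
      ENNReal.tsum_mul_left, hq.2 b]

lemma coupling_mass {μ ν : V → ℝ≥0∞} {q : V × V → ℝ≥0∞} (hq : IsCoupling μ ν q)
    (hμ : ∑' a, μ a = 1) : ∑' p : V × V, q p = 1 := by
  have := marg_fst hq (fun _ => 1)
  simpa [hμ] using this
lemma triangle4 {d : V → V → ℝ} (hd : IsMetric d) (x y a b : V) :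
    ENNReal.ofReal (d x y) ≤
      ENNReal.ofReal (d x a) + ENNReal.ofReal (d a b) + ENNReal.ofReal (d y b) := by
  have h : d x y ≤ d x a + d a b + d y b := by
    have t1 := hd.2.2 x a y
    have t2 := hd.2.2 a b y
    have := hd.1 y b
    linarith
  calc ENNReal.ofReal (d x y) ≤ ENNReal.ofReal (d x a + d a b + d y b) :=
        ENNReal.ofReal_le_ofReal h
    _ ≤ ENNReal.ofReal (d x a + d a b) + ENNReal.ofReal (d y b) := ENNReal.ofReal_add_le
    _ ≤ ENNReal.ofReal (d x a) + ENNReal.ofReal (d a b) + ENNReal.ofReal (d y b) := by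
        gcongr; exact ENNReal.ofReal_add_le

lemma triangle4' {d : V → V → ℝ} (hd : IsMetric d) (x y a b : V) :
    ENNReal.ofReal (d a b) ≤
      ENNReal.ofReal (d x a) + ENNReal.ofReal (d x y) + ENNReal.ofReal (d y b) := by
  have h : d a b ≤ d x a + d x y + d y b := by
    have t1 := hd.2.2 a x b
    have t2 := hd.2.2 x y b
    have := hd.1 a x
    linarith
  calc ENNReal.ofReal (d a b) ≤ ENNReal.ofReal (d x a + d x y + d y b) :=
        ENNReal.ofReal_le_ofReal h
    _ ≤ ENNReal.ofReal (d x a + d x y) + ENNReal.ofReal (d y b) := ENNReal.ofReal_add_le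
    _ ≤ ENNReal.ofReal (d x a) + ENNReal.ofReal (d x y) + ENNReal.ofReal (d y b) := by
        gcongr; exact ENNReal.ofReal_add_le

lemma cost_lower {d : V → V → ℝ} (hd : IsMetric d) (x y : V) {μ ν : V → ℝ≥0∞}
    {q : V × V → ℝ≥0∞} (hq : IsCoupling μ ν q) (hμ : ∑' a, μ a = 1) :
    ENNReal.ofReal (d x y) ≤ wcost d q + (∑' a, ENNReal.ofReal (d x a) * μ a)
      + ∑' b, ENNReal.ofReal (d y b) * ν b := by
  have key : ∑' p : V × V, ENNReal.ofReal (d x y) * q p ≤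
      ∑' p : V × V, (ENNReal.ofReal (d x p.1) * q p + ENNReal.ofReal (d p.1 p.2) * q p
        + ENNReal.ofReal (d y p.2) * q p) := by
    apply ENNReal.tsum_le_tsum
    intro p
    calc ENNReal.ofReal (d x y) * q p
        ≤ (ENNReal.ofReal (d x p.1) + ENNReal.ofReal (d p.1 p.2) + ENNReal.ofReal (d y p.2)) * q p := by
          gcongr; exact triangle4 hd x y p.1 p.2
      _ = _ := by ring
  rw [ENNReal.tsum_mul_left, coupling_mass hq hμ, mul_one] at key
  rw [ENNReal.tsum_add, ENNReal.tsum_add] at key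
  rw [marg_fst hq (fun a => ENNReal.ofReal (d x a)), marg_snd hq (fun b => ENNReal.ofReal (d y b))] at key
  calc ENNReal.ofReal (d x y) ≤ _ := key
    _ = wcost d q + (∑' a, ENNReal.ofReal (d x a) * μ a)
        + ∑' b, ENNReal.ofReal (d y b) * ν b := by rw [wcost]; ring

lemma wass_lower {d : V → V → ℝ} (hd : IsMetric d) (x y : V) {μ ν : V → ℝ≥0∞}
    (hμ : ∑' a, μ a = 1) :
    ENNReal.ofReal (d x y) ≤ Wass d μ ν + (∑' a, ENNReal.ofReal (d x a) * μ a)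
      + ∑' b, ENNReal.ofReal (d y b) * ν b := by
  rw [wass_eq, ENNReal.iInf_add, ENNReal.iInf_add]
  exact le_iInf fun q => cost_lower hd x y q.2 hμ

lemma wass_upper {d : V → V → ℝ} (hd : IsMetric d) (x y : V) {μ ν : V → ℝ≥0∞}
    (hμ : ∑' a, μ a = 1) (hν : ∑' b, ν b = 1) :
    Wass d μ ν ≤ ENNReal.ofReal (d x y) + (∑' a, ENNReal.ofReal (d x a) * μ a)
      + ∑' b, ENNReal.ofReal (d y b) * ν b := by
  have hc := prod_coupling μ ν hμ hν
  rw [wass_eq]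
  refine le_trans (iInf_le _ ⟨_, hc⟩) ?_
  have key : wcost d (fun p => μ p.1 * ν p.2) ≤
      ∑' p : V × V, (ENNReal.ofReal (d x p.1) * (μ p.1 * ν p.2)
        + ENNReal.ofReal (d x y) * (μ p.1 * ν p.2)
        + ENNReal.ofReal (d y p.2) * (μ p.1 * ν p.2)) := by
    apply ENNReal.tsum_le_tsum
    intro p
    calc ENNReal.ofReal (d p.1 p.2) * (μ p.1 * ν p.2)
        ≤ (ENNReal.ofReal (d x p.1) + ENNReal.ofReal (d x y) + ENNReal.ofReal (d y p.2))
            * (μ p.1 * ν p.2) := by gcongr; exact triangle4' hd x y p.1 p.2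
      _ = _ := by ring
  refine le_trans key ?_
  rw [ENNReal.tsum_add, ENNReal.tsum_add, ENNReal.tsum_mul_left,
    coupling_mass hc hμ, mul_one, marg_fst hc (fun a => ENNReal.ofReal (d x a)), marg_snd hc (fun b => ENNReal.ofReal (d y b))]
  apply le_of_eq; ring
lemma wass_convex {d : V → V → ℝ} {μ₁ ν₁ μ₂ ν₂ : V → ℝ≥0∞} {t s : ℝ≥0∞}
    (hts : t + s = 1)
    (hW₁ : Wass d μ₁ ν₁ ≠ ⊤) (hW₂ : Wass d μ₂ ν₂ ≠ ⊤) :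
    Wass d (fun a => t * μ₁ a + s * μ₂ a) (fun b => t * ν₁ b + s * ν₂ b)
      ≤ t * Wass d μ₁ ν₁ + s * Wass d μ₂ ν₂ := by
  set W₁ := Wass d μ₁ ν₁ with hw1
  set W₂ := Wass d μ₂ ν₂ with hw2
  apply ENNReal.le_of_forall_pos_le_add
  intro η hη _
  have hη' : (η : ℝ≥0∞) ≠ 0 := by exact_mod_cast hη.ne'
  have h1 : Wass d μ₁ ν₁ < W₁ + η := lt_of_le_of_lt (le_of_eq hw1.symm)
    (ENNReal.lt_add_right hW₁ hη')
  have h2 : Wass d μ₂ ν₂ < W₂ + η := lt_of_le_of_lt (le_of_eq hw2.symm)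
    (ENNReal.lt_add_right hW₂ hη')
  rw [wass_eq, iInf_lt_iff] at h1 h2
  obtain ⟨q₁, hq₁⟩ := h1
  obtain ⟨q₂, hq₂⟩ := h2
  set Q : V × V → ℝ≥0∞ := fun p => t * q₁.1 p + s * q₂.1 p with hQ
  have hQc : IsCoupling (fun a => t * μ₁ a + s * μ₂ a) (fun b => t * ν₁ b + s * ν₂ b) Q := by
    constructor
    · intro a
      rw [show (fun b => Q (a, b)) = fun b => t * q₁.1 (a, b) + s * q₂.1 (a, b) from rfl,
        ENNReal.tsum_add, ENNReal.tsum_mul_left, ENNReal.tsum_mul_left,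
        q₁.2.1 a, q₂.2.1 a]
    · intro b
      rw [show (fun a => Q (a, b)) = fun a => t * q₁.1 (a, b) + s * q₂.1 (a, b) from rfl,
        ENNReal.tsum_add, ENNReal.tsum_mul_left, ENNReal.tsum_mul_left,
        q₁.2.2 b, q₂.2.2 b]
  have hcost : wcost d Q = t * wcost d q₁.1 + s * wcost d q₂.1 := by
    rw [wcost]
    calc ∑' p : V × V, ENNReal.ofReal (d p.1 p.2) * Q p
        = ∑' p : V × V, (t * (ENNReal.ofReal (d p.1 p.2) * q₁.1 p)
            + s * (ENNReal.ofReal (d p.1 p.2) * q₂.1 p)) := tsum_congr fun p => by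
          rw [hQ]; ring
      _ = _ := by rw [ENNReal.tsum_add, ENNReal.tsum_mul_left, ENNReal.tsum_mul_left]; rfl
  calc Wass d (fun a => t * μ₁ a + s * μ₂ a) (fun b => t * ν₁ b + s * ν₂ b)
      ≤ wcost d Q := by rw [wass_eq]; exact iInf_le _ (⟨Q, hQc⟩ : {q : V × V → ℝ≥0∞ // IsCoupling _ _ q})
    _ = t * wcost d q₁.1 + s * wcost d q₂.1 := hcost
    _ ≤ t * (W₁ + η) + s * (W₂ + η) := by
        gcongr
    _ = t * W₁ + s * W₂ + (t + s) * η := by ring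
    _ = t * W₁ + s * W₂ + η := by rw [hts, one_mul]
lemma delta_summable [DecidableEq V] (z : V) : Summable (delta z) := by
  apply summable_of_ne_finset_zero (s := {z})
  intro w hw
  simp only [Finset.mem_singleton] at hw
  simp [delta, hw]

lemma delta_tsum [DecidableEq V] (z : V) : ∑' w, delta z w = 1 := by
  rw [tsum_eq_single z]
  · simp [delta]
  · intro w hw; simp [delta, hw]

lemma pmf_total [DecidableEq V] (z : V) {μ : V → ℝ} (hs : Summable μ)
    (h0 : ∑' w, μ w = 0) {ε : ℝ} (hpos : ∀ w, 0 ≤ delta z w + ε * μ w) :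
    ∑' w, ENNReal.ofReal (delta z w + ε * μ w) = 1 := by
  have hsum : Summable fun w => delta z w + ε * μ w := (delta_summable z).add (hs.mul_left ε)
  rw [← ENNReal.ofReal_tsum_of_nonneg hpos hsum,
      Summable.tsum_add (delta_summable z) (hs.mul_left ε), tsum_mul_left, h0, mul_zero, add_zero,
      delta_tsum, ENNReal.ofReal_one]

lemma moment_bound [DecidableEq V] {d : V → V → ℝ} (hd : IsMetric d) (z : V)
    {μ : V → ℝ} (hm : Summable fun w => |μ w| * d z w) {ε : ℝ} (hε : 0 ≤ ε) :
    (∑' w, ENNReal.ofReal (d z w) * ENNReal.ofReal (delta z w + ε * μ w))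
      ≤ ENNReal.ofReal (ε * ∑' w, |μ w| * d z w) := by
  have key : ∀ w, ENNReal.ofReal (d z w) * ENNReal.ofReal (delta z w + ε * μ w)
      ≤ ENNReal.ofReal (ε * (|μ w| * d z w)) := by
    intro w
    by_cases hw : w = z
    · subst hw
      simp [(hd.2.1 w w).2 rfl]
    · have hdel : delta z w = 0 := by simp [delta, hw]
      rw [hdel, zero_add, ← ENNReal.ofReal_mul (metric_nonneg hd z w)]
      apply ENNReal.ofReal_le_ofReal
      have h2 : d z w * (ε * μ w) ≤ d z w * (ε * |μ w|) :=
        mul_le_mul_of_nonneg_left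
          (mul_le_mul_of_nonneg_left (le_abs_self _) hε) (metric_nonneg hd z w)
      calc d z w * (ε * μ w) ≤ d z w * (ε * |μ w|) := h2
        _ = ε * (|μ w| * d z w) := by ring
  calc (∑' w, ENNReal.ofReal (d z w) * ENNReal.ofReal (delta z w + ε * μ w))
      ≤ ∑' w, ENNReal.ofReal (ε * (|μ w| * d z w)) := ENNReal.tsum_le_tsum key
    _ = ENNReal.ofReal (∑' w, ε * (|μ w| * d z w)) :=
        (ENNReal.ofReal_tsum_of_nonneg (fun w => mul_nonneg hε (mul_nonneg (abs_nonneg _) (metric_nonneg hd z w))) (hm.mul_left ε)).symm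
    _ = ENNReal.ofReal (ε * ∑' w, |μ w| * d z w) := by rw [tsum_mul_left]

noncomputable def Wfun [DecidableEq V] (d : V → V → ℝ) (x y : V) (μx μy : V → ℝ) (ε : ℝ) : ℝ≥0∞ :=
  Wass d (fun w => ENNReal.ofReal (delta x w + ε * μx w))
    (fun w => ENNReal.ofReal (delta y w + ε * μy w))
theorem ctor_exists_for_time_affine_walks
    [Countable V] [DecidableEq V] (d : V → V → ℝ) (hd : IsMetric d)
    (x y : V) (hxy : x ≠ y) (μx μy : V → ℝ)
    (hsx : Summable fun w => |μx w|) (hsy : Summable fun w => |μy w|)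
    (h0x : ∑' w, μx w = 0) (h0y : ∑' w, μy w = 0)
    (hmx : Summable fun w => |μx w| * d x w)
    (hmy : Summable fun w => |μy w| * d y w)
    (ε₀ : ℝ) (hε₀ : 0 < ε₀)
    (hposx : ∀ ε ∈ Set.Icc (0 : ℝ) ε₀, ∀ w, 0 ≤ delta x w + ε * μx w)
    (hposy : ∀ ε ∈ Set.Icc (0 : ℝ) ε₀, ∀ w, 0 ≤ delta y w + ε * μy w) :
    ∃ L : ℝ, Tendsto
      (fun ε : ℝ => (1 / ε) *
        (1 - (Wass d (fun w => ENNReal.ofReal (delta x w + ε * μx w))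
                     (fun w => ENNReal.ofReal (delta y w + ε * μy w))).toReal / d x y))
      (nhdsWithin 0 (Set.Ioi 0)) (nhds L) := by
  show ∃ L : ℝ, Tendsto
      (fun ε : ℝ => (1 / ε) * (1 - (Wfun d x y μx μy ε).toReal / d x y))
      (nhdsWithin 0 (Set.Ioi 0)) (nhds L)
  have hD : 0 < d x y := by
    rcases lt_or_eq_of_le (metric_nonneg hd x y) with h | h
    · exact h
    · exact absurd ((hd.2.1 x y).1 h.symm) hxy
  set D := d x y with hDdef
  set Mx := ∑' w, |μx w| * d x w with hMxdef
  set My := ∑' w, |μy w| * d y w with hMydef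
  have hMx0 : 0 ≤ Mx := tsum_nonneg fun w => mul_nonneg (abs_nonneg _) (metric_nonneg hd x w)
  have hMy0 : 0 ≤ My := tsum_nonneg fun w => mul_nonneg (abs_nonneg _) (metric_nonneg hd y w)
  set C := Mx + My with hCdef
  have hC0 : 0 ≤ C := add_nonneg hMx0 hMy0
  have hsumx : Summable μx := hsx.of_abs
  have hsumy : Summable μy := hsy.of_abs
  have pmfx : ∀ ε ∈ Set.Icc (0:ℝ) ε₀, ∑' w, ENNReal.ofReal (delta x w + ε * μx w) = 1 :=
    fun ε hε => pmf_total x hsumx h0x (hposx ε hε)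
  have pmfy : ∀ ε ∈ Set.Icc (0:ℝ) ε₀, ∑' w, ENNReal.ofReal (delta y w + ε * μy w) = 1 :=
    fun ε hε => pmf_total y hsumy h0y (hposy ε hε)
  -- upper bound
  have hub : ∀ ε ∈ Set.Icc (0:ℝ) ε₀, Wfun d x y μx μy ε ≤
      ENNReal.ofReal D + ENNReal.ofReal (ε * Mx) + ENNReal.ofReal (ε * My) := by
    intro ε hε
    refine le_trans (wass_upper hd x y (pmfx ε hε) (pmfy ε hε)) ?_
    gcongr
    · exact moment_bound hd x hmx hε.1
    · exact moment_bound hd y hmy hε.1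
  have hlbE : ∀ ε ∈ Set.Icc (0:ℝ) ε₀, ENNReal.ofReal D ≤
      Wfun d x y μx μy ε + ENNReal.ofReal (ε * Mx) + ENNReal.ofReal (ε * My) := by
    intro ε hε
    have h := wass_lower hd x y (μ := fun w => ENNReal.ofReal (delta x w + ε * μx w))
      (ν := fun w => ENNReal.ofReal (delta y w + ε * μy w)) (pmfx ε hε)
    refine le_trans h ?_
    have e : Wass d (fun w => ENNReal.ofReal (delta x w + ε * μx w))
        (fun w => ENNReal.ofReal (delta y w + ε * μy w)) = Wfun d x y μx μy ε := rfl
    rw [e]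
    gcongr
    · exact moment_bound hd x hmx hε.1
    · exact moment_bound hd y hmy hε.1
  have hWne : ∀ ε ∈ Set.Icc (0:ℝ) ε₀, Wfun d x y μx μy ε ≠ ⊤ := by
    intro ε hε
    exact ne_top_of_le_ne_top
      (ENNReal.add_ne_top.mpr ⟨ENNReal.add_ne_top.mpr
        ⟨ENNReal.ofReal_ne_top, ENNReal.ofReal_ne_top⟩, ENNReal.ofReal_ne_top⟩)
      (hub ε hε)
  -- real bounds
  have hf_ub : ∀ ε ∈ Set.Icc (0:ℝ) ε₀, (Wfun d x y μx μy ε).toReal ≤ D + ε * C := by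
    intro ε hε
    have h := hub ε hε
    have heq : ENNReal.ofReal D + ENNReal.ofReal (ε * Mx) + ENNReal.ofReal (ε * My)
        = ENNReal.ofReal (D + ε * C) := by
      rw [← ENNReal.ofReal_add hD.le (mul_nonneg hε.1 hMx0),
          ← ENNReal.ofReal_add (add_nonneg hD.le (mul_nonneg hε.1 hMx0))
            (mul_nonneg hε.1 hMy0)]
      congr 1
      rw [hCdef]; ring
    exact ENNReal.toReal_le_of_le_ofReal
      (add_nonneg hD.le (mul_nonneg hε.1 hC0)) (heq ▸ h)
  have hf_lb : ∀ ε ∈ Set.Icc (0:ℝ) ε₀, D - ε * C ≤ (Wfun d x y μx μy ε).toReal := by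
    intro ε hε
    have h := hlbE ε hε
    have hne1 : Wfun d x y μx μy ε + ENNReal.ofReal (ε * Mx) ≠ ⊤ :=
      ENNReal.add_ne_top.mpr ⟨hWne ε hε, ENNReal.ofReal_ne_top⟩
    have hne2 : Wfun d x y μx μy ε + ENNReal.ofReal (ε * Mx) + ENNReal.ofReal (ε * My) ≠ ⊤ :=
      ENNReal.add_ne_top.mpr ⟨hne1, ENNReal.ofReal_ne_top⟩
    have h2 := ENNReal.toReal_mono hne2 h
    rw [ENNReal.toReal_ofReal hD.le, ENNReal.toReal_add hne1 ENNReal.ofReal_ne_top,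
      ENNReal.toReal_add (hWne ε hε) ENNReal.ofReal_ne_top,
      ENNReal.toReal_ofReal (mul_nonneg hε.1 hMx0),
      ENNReal.toReal_ofReal (mul_nonneg hε.1 hMy0)] at h2
    rw [hCdef]
    linarith
  have h0Icc : (0:ℝ) ∈ Set.Icc (0:ℝ) ε₀ := ⟨le_refl _, hε₀.le⟩
  have hW0 : Wfun d x y μx μy 0 = ENNReal.ofReal D := by
    apply le_antisymm
    · have := hub 0 h0Icc
      simpa using this
    · have := hlbE 0 h0Icc
      simpa using this
  -- slope monotonicity
  have hslope : ∀ a b : ℝ, 0 < a → a ≤ b → b ≤ ε₀ →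
      ((Wfun d x y μx μy a).toReal - D) / a ≤ ((Wfun d x y μx μy b).toReal - D) / b := by
    intro a b ha hab hb
    have hb0 : 0 < b := lt_of_lt_of_le ha hab
    have hs1 : 0 ≤ a / b := by positivity
    have hs2 : a / b ≤ 1 := (div_le_one hb0).mpr hab
    set t : ℝ≥0∞ := ENNReal.ofReal (1 - a / b) with htdef
    set s : ℝ≥0∞ := ENNReal.ofReal (a / b) with hsdef
    have hts : t + s = 1 := by
      rw [htdef, hsdef, ← ENNReal.ofReal_add (by linarith) hs1]
      norm_num
    have haIcc : a ∈ Set.Icc (0:ℝ) ε₀ := ⟨ha.le, le_trans hab hb⟩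
    have hbIcc : b ∈ Set.Icc (0:ℝ) ε₀ := ⟨hb0.le, hb⟩
    have hxeq : (fun w => ENNReal.ofReal (delta x w + a * μx w))
        = fun w => t * ENNReal.ofReal (delta x w + 0 * μx w)
            + s * ENNReal.ofReal (delta x w + b * μx w) := by
      funext w
      rw [htdef, hsdef, ← ENNReal.ofReal_mul (by linarith), ← ENNReal.ofReal_mul hs1,
        ← ENNReal.ofReal_add (mul_nonneg (by linarith) (hposx 0 h0Icc w))
          (mul_nonneg hs1 (hposx b hbIcc w))]
      congr 1
      field_simp
      ring
    have hyeq : (fun w => ENNReal.ofReal (delta y w + a * μy w))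
        = fun w => t * ENNReal.ofReal (delta y w + 0 * μy w)
            + s * ENNReal.ofReal (delta y w + b * μy w) := by
      funext w
      rw [htdef, hsdef, ← ENNReal.ofReal_mul (by linarith), ← ENNReal.ofReal_mul hs1,
        ← ENNReal.ofReal_add (mul_nonneg (by linarith) (hposy 0 h0Icc w))
          (mul_nonneg hs1 (hposy b hbIcc w))]
      congr 1
      field_simp
      ring
    have hconv : Wfun d x y μx μy a ≤ t * Wfun d x y μx μy 0 + s * Wfun d x y μx μy b := by
      rw [Wfun, hxeq, hyeq]
      exact wass_convex hts (hWne 0 h0Icc) (hWne b hbIcc)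
    -- pass to toReal
    have hfin1 : t * Wfun d x y μx μy 0 ≠ ⊤ :=
      ENNReal.mul_ne_top ENNReal.ofReal_ne_top (hWne 0 h0Icc)
    have hfin2 : s * Wfun d x y μx μy b ≠ ⊤ :=
      ENNReal.mul_ne_top ENNReal.ofReal_ne_top (hWne b hbIcc)
    have h2 := ENNReal.toReal_mono (ENNReal.add_ne_top.mpr ⟨hfin1, hfin2⟩) hconv
    rw [ENNReal.toReal_add hfin1 hfin2, ENNReal.toReal_mul, ENNReal.toReal_mul, hW0,
      htdef, hsdef, ENNReal.toReal_ofReal (by linarith : (0:ℝ) ≤ 1 - a/b),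
      ENNReal.toReal_ofReal hs1, ENNReal.toReal_ofReal hD.le] at h2
    -- h2 : f a ≤ (1 - a/b) * D + (a/b) * f b
    set fa := (Wfun d x y μx μy a).toReal
    set fb := (Wfun d x y μx μy b).toReal
    rw [div_le_div_iff₀ ha hb0]
    have h3 : fa - D ≤ a / b * (fb - D) := by nlinarith
    have h4 : (fa - D) * b ≤ (a / b * (fb - D)) * b :=
      mul_le_mul_of_nonneg_right h3 hb0.le
    have h5 : (a / b * (fb - D)) * b = (fb - D) * a := by
      field_simp
    linarith
  set F : ℝ → ℝ := fun ε => (1/ε) * (1 - (Wfun d x y μx μy ε).toReal / D) with hFdef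
  have hFz : ∀ z : ℝ, z ≠ 0 →
      F z = -(((Wfun d x y μx μy z).toReal - D) / z) / D := by
    intro z hz
    rw [hFdef]
    field_simp
    try ring
  have hganti : ∀ a b : ℝ, 0 < a → a ≤ b → b ≤ ε₀ → F b ≤ F a := by
    intro a b ha hab hb
    have hb0 : 0 < b := lt_of_lt_of_le ha hab
    rw [hFz a ha.ne', hFz b hb0.ne', div_le_div_iff₀ hD hD]
    have hsl := hslope a b ha hab hb
    have := mul_le_mul_of_nonneg_right hsl hD.le
    linarith
  have hFub : ∀ ε ∈ Set.Ioc (0:ℝ) ε₀, F ε ≤ C / D := by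
    intro ε hε
    rw [hFz ε hε.1.ne', div_le_div_iff₀ hD hD]
    have h1 := hf_lb ε ⟨hε.1.le, hε.2⟩
    have h2 : -(((Wfun d x y μx μy ε).toReal - D) / ε) ≤ C := by
      rw [← neg_div, div_le_iff₀ hε.1]
      linarith
    have := mul_le_mul_of_nonneg_right h2 hD.le
    linarith
  set A := F '' Set.Ioc 0 ε₀ with hAdef
  have hAne : A.Nonempty := ⟨F ε₀, ⟨ε₀, ⟨hε₀, le_refl _⟩, rfl⟩⟩
  have hAbdd : BddAbove A := ⟨C/D, by rintro _ ⟨ε, hε, rfl⟩; exact hFub ε hε⟩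
  refine ⟨sSup A, ?_⟩
  rw [Metric.tendsto_nhdsWithin_nhds]
  intro η hη
  obtain ⟨_, ⟨ε', hε', rfl⟩, hlt⟩ :=
    exists_lt_of_lt_csSup hAne (show sSup A - η < sSup A by linarith)
  refine ⟨ε', hε'.1, ?_⟩
  intro ε hεIoi hdist
  have hε : 0 < ε := hεIoi
  rw [Real.dist_eq, sub_zero, abs_of_pos hε] at hdist
  have h1 : F ε ≤ sSup A := le_csSup hAbdd ⟨ε, ⟨hε, le_trans hdist.le hε'.2⟩, rfl⟩
  have h2 : F ε' ≤ F ε := hganti ε ε' hε hdist.le hε'.2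
  rw [Real.dist_eq, abs_lt]
  constructor <;> linarith
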